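/- Let B = [[0,1],[-1,0]] and define P¹_m(x,t) = diag(p_{2m-1}(x,t), -p_{2m}(x,t)), where p_{2m-1}, p_{2m} are the wave polynomials. Then P¹_m satisfies B·∂ₓP¹_m + ∂ₜP¹_m·B = 0. -/

import Mathlib

open Matrix

noncomputable section

attribute [local instance] Matrix.frobeniusNormedAddCommGroup Matrix.frobeniusNormedSpace

/-- The matrix B = [[0,1],[-1,0]]. -/
def Bmat : Matrix (Fin 2) (Fin 2) ℝ := !![0, 1; -1, 0]

/-- The odd-indexed wave polynomial p_{2m-1}(x,t) = Σ_{even k ≤ m} C(m,k) x^{m-k} t^k. -/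
def pOdd (m : ℕ) (x t : ℝ) : ℝ :=
  ∑ k ∈ Finset.range (m + 1), if Even k then (m.choose k : ℝ) * x ^ (m - k) * t ^ k else 0

/-- The even-indexed wave polynomial p_{2m}(x,t) = Σ_{odd k ≤ m} C(m,k) x^{m-k} t^k. -/
def pEven (m : ℕ) (x t : ℝ) : ℝ :=
  ∑ k ∈ Finset.range (m + 1), if Odd k then (m.choose k : ℝ) * x ^ (m - k) * t ^ k else 0

/-- The wave matrix P¹_m(x,t) = diag(p_{2m-1}(x,t), -p_{2m}(x,t)). -/
def P1 (m : ℕ) (x t : ℝ) : Matrix (Fin 2) (Fin 2) ℝ :=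
  !![pOdd m x t, 0; 0, -pEven m x t]

/-! The wave polynomials are the even and odd parts in `t` of `(x + t) ^ m`, i.e.
`p_{2m-1} = ((x + t) ^ m + (x - t) ^ m) / 2` and `p_{2m} = ((x + t) ^ m - (x - t) ^ m) / 2`.
Hence `∂ₓ p_{2m-1} = ∂ₜ p_{2m}` and `∂ₜ p_{2m-1} = ∂ₓ p_{2m}`, and with these equalities the identity
reduces to `B * diag(a, -b) + diag(b, -a) * B = 0`. -/

section Binomial

variable {R : Type*} [CommRing R]

lemma add_pow_add_sub_pow (m : ℕ) (x t : R) :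
    (x + t) ^ m + (x - t) ^ m =
      2 * ∑ k ∈ Finset.range (m + 1), if Even k then (m.choose k : R) * x ^ (m - k) * t ^ k else 0 := by
  rw [add_comm x t, sub_eq_neg_add, add_pow, add_pow, ← Finset.sum_add_distrib, Finset.mul_sum]
  refine Finset.sum_congr rfl fun k _ => ?_
  rcases Nat.even_or_odd k with hk | hk
  · simp only [hk, hk.neg_pow, if_true]; ring
  · simp only [hk.neg_pow, Nat.not_even_iff_odd.mpr hk, if_false]; ring

lemma add_pow_sub_sub_pow (m : ℕ) (x t : R) :
    (x + t) ^ m - (x - t) ^ m =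
      2 * ∑ k ∈ Finset.range (m + 1), if Odd k then (m.choose k : R) * x ^ (m - k) * t ^ k else 0 := by
  rw [add_comm x t, sub_eq_neg_add x t, add_pow, add_pow, ← Finset.sum_sub_distrib, Finset.mul_sum]
  refine Finset.sum_congr rfl fun k _ => ?_
  rcases Nat.even_or_odd k with hk | hk
  · simp only [hk.neg_pow, Nat.not_odd_iff_even.mpr hk, if_false]; ring
  · simp only [hk, hk.neg_pow, if_true]; ring

end Binomial

lemma pOdd_eq (m : ℕ) (x t : ℝ) : pOdd m x t = ((x + t) ^ m + (x - t) ^ m) / 2 := by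
  rw [add_pow_add_sub_pow, pOdd]; ring

lemma pEven_eq (m : ℕ) (x t : ℝ) : pEven m x t = ((x + t) ^ m - (x - t) ^ m) / 2 := by
  rw [add_pow_sub_sub_pow, pEven]; ring

lemma hasDerivAt_fin_two_diag {f g : ℝ → ℝ} {f' g' x : ℝ} (hf : HasDerivAt f f' x)
    (hg : HasDerivAt g g' x) :
    HasDerivAt (fun s => !![f s, 0; 0, g s]) !![f', 0; 0, g'] x := by
  have hsplit (a b : ℝ) : !![a, 0; 0, b] = a • !![1, 0; 0, 0] + b • !![0, 0; 0, 1] := by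
    ext i j; fin_cases i <;> fin_cases j <;> simp
  simp only [hsplit (f _), hsplit f']
  exact (hf.smul_const _).add (hg.smul_const _)

section WaveDerivatives

variable (m : ℕ) (x t : ℝ)

lemma hasDerivAt_P1_fst :
    HasDerivAt (fun s => P1 m s t)
      !![(m * (x + t) ^ (m - 1) + m * (x - t) ^ (m - 1)) / 2, 0;
        0, -((m * (x + t) ^ (m - 1) - m * (x - t) ^ (m - 1)) / 2)] x := by
  have hplus := ((hasDerivAt_id' x).add_const t).fun_pow m
  have hminus := ((hasDerivAt_id' x).sub_const t).fun_pow m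
  simp only [P1, pOdd_eq, pEven_eq]
  refine hasDerivAt_fin_two_diag ?_ (HasDerivAt.neg ?_)
  · exact ((hplus.add hminus).div_const 2).congr_deriv (by ring)
  · exact ((hplus.sub hminus).div_const 2).congr_deriv (by ring)

lemma hasDerivAt_P1_snd :
    HasDerivAt (fun s => P1 m x s)
      !![(m * (x + t) ^ (m - 1) - m * (x - t) ^ (m - 1)) / 2, 0;
        0, -((m * (x + t) ^ (m - 1) + m * (x - t) ^ (m - 1)) / 2)] t := by
  have hplus := ((hasDerivAt_id' t).const_add x).fun_pow m
  have hminus := ((hasDerivAt_id' t).const_sub x).fun_pow m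
  simp only [P1, pOdd_eq, pEven_eq]
  refine hasDerivAt_fin_two_diag ?_ (HasDerivAt.neg ?_)
  · exact ((hplus.add hminus).div_const 2).congr_deriv (by ring)
  · exact ((hplus.sub hminus).div_const 2).congr_deriv (by ring)

end WaveDerivatives

lemma Bmat_mul_diag_add_diag_mul_Bmat (a b : ℝ) :
    Bmat * !![a, 0; 0, -b] + !![b, 0; 0, -a] * Bmat = 0 := by
  ext i j; fin_cases i <;> fin_cases j <;> simp [Bmat]

theorem stmt_7_general (m : ℕ) (x t : ℝ) :
    Bmat * deriv (fun s => P1 m s t) x + deriv (fun s => P1 m x s) t * Bmat = 0 := by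
  -- `show` elaborates `deriv` with the statement's instance path, so that `rw` can match it.
  rw [show deriv (fun s => P1 m s t) x = _ from (hasDerivAt_P1_fst m x t).deriv,
    show deriv (fun s => P1 m x s) t = _ from (hasDerivAt_P1_snd m x t).deriv]
  exact Bmat_mul_diag_add_diag_mul_Bmat _ _

theorem stmt_7 (m : ℕ) (hm : 1 ≤ m) (x t : ℝ) :
    Bmat * deriv (fun s => P1 m s t) x + deriv (fun s => P1 m x s) t * Bmat = 0 :=
  stmt_7_general m x t
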